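/- Let (c_n) be a bounded sequence and τ > 0. Then Σ_{n≥0} c_n e^{-n²π²τ} √2 cos(nπx) = Σ_{i≥0} y_i x^{2i}/(2i)! with y_i := √2 Σ_{n≥0} c_n e^{-n²π²τ}(-n²π²)^i, and the coefficients satisfy |y_i| ≤ C(1 + 1/√τ) · i!/τ^i where C ≤ K sup_n |c_n| for a universal constant K. -/

import Mathlib

/-!
Expanding `cos (nπx)` in its Taylor series gives a double series dominated by
`∑ₙ |cₙ| e^{-n²π²τ} cosh (nπx)`, which converges because the Gaussian factor beats any
exponential; hence the order of summation may be exchanged.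

For the coefficients put `y = n²π²τ` and split `e^{-y} = e^{-iy/(i+1)} e^{-y/(i+1)}`. The
supremum of `y^i e^{-iy/(i+1)}` is `((i+1)/e)^i`, and by the integral test the remaining Gaussian
sum `∑ₙ e^{-n²π²τ/(i+1)}` is at most `1 + √((i+1)/(πτ))/2`. Stirling's lower bound for `(i+1)!`
turns `√(i+1) ((i+1)/e)^i` into `O(i!)`.
-/

open Real Nat

section Gaussian

variable {a : ℝ}

lemma antitoneOn_exp_neg_mul_sq (ha : 0 ≤ a) :
    AntitoneOn (fun x : ℝ => exp (-a * x ^ 2)) (Set.Ici 0) := by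
  intro x hx y _ hxy
  have := mul_le_mul_of_nonneg_left (pow_le_pow_left₀ hx hxy 2) ha
  exact exp_le_exp.2 (by linarith)

lemma summable_exp_neg_mul_sq (ha : 0 < a) : Summable fun n : ℕ => exp (-a * n ^ 2) :=
  (antitoneOn_exp_neg_mul_sq ha.le).summable_of_integrableOn_Ioi_zero
    (integrable_exp_neg_mul_sq ha).integrableOn fun _ _ => (exp_pos _).le

lemma tsum_exp_neg_mul_sq_le (ha : 0 < a) :
    ∑' n : ℕ, exp (-a * n ^ 2) ≤ 1 + √(π / a) / 2 := by
  have htail := (antitoneOn_exp_neg_mul_sq ha.le).tsum_add_one_le_integral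
    (integrable_exp_neg_mul_sq ha).integrableOn fun _ _ => (exp_pos _).le
  rw [integral_gaussian_Ioi] at htail
  rw [(summable_exp_neg_mul_sq ha).tsum_eq_zero_add]
  simpa using htail

lemma cosh_le_exp_abs (x : ℝ) : cosh x ≤ exp |x| := by
  rw [← cosh_abs, cosh_eq]
  have : exp (-|x|) ≤ exp |x| := exp_le_exp.2 (by linarith [abs_nonneg x])
  linarith

lemma summable_exp_neg_mul_sq_mul_cosh (ha : 0 < a) (r : ℝ) :
    Summable fun n : ℕ => exp (-a * n ^ 2) * cosh (n * r) := by
  refine ((summable_exp_neg_mul_sq (half_pos ha)).mul_left (exp (r ^ 2 / (2 * a)))).of_nonneg_of_le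
    (fun n => by have := cosh_pos (n * r); positivity) fun n => ?_
  have hsq : r ^ 2 / (2 * a) + (a / 2) * n ^ 2 - n * |r| = (a * n - |r|) ^ 2 / (2 * a) := by
    rw [← sq_abs r]; field_simp; ring
  have : 0 ≤ (a * n - |r|) ^ 2 / (2 * a) := by positivity
  calc exp (-a * n ^ 2) * cosh (n * r) ≤ exp (-a * n ^ 2) * exp |n * r| := by
        gcongr; exact cosh_le_exp_abs _
    _ ≤ exp (r ^ 2 / (2 * a)) * exp (-(a / 2) * n ^ 2) := by
      rw [← exp_add, ← exp_add, abs_mul, Nat.abs_cast]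
      exact exp_le_exp.2 (by linarith)

end Gaussian

section Moments

lemma pow_mul_exp_neg_le (i : ℕ) {y : ℝ} (hy : 0 ≤ y) :
    y ^ i * exp (-y) ≤ ((i + 1) / exp 1) ^ i * exp (-(y / (i + 1))) := by
  set u := y / (i + 1)
  have hy : y = (i + 1) * u := by simp only [u]; field_simp
  have hu : 0 ≤ u := by positivity
  have hexp : exp (-y) = exp (-u) ^ i * exp (-u) := by
    rw [← exp_nat_mul, ← exp_add, hy]; ring_nf
  calc y ^ i * exp (-y) = (i + 1) ^ i * (u * exp (-u)) ^ i * exp (-u) := by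
        rw [hexp, hy, mul_pow]; ring
    _ ≤ (i + 1) ^ i * exp (-1) ^ i * exp (-u) := by
        gcongr; exact Real.mul_exp_neg_le_exp_neg_one u
    _ = ((i + 1) / exp 1) ^ i * exp (-u) := by rw [exp_neg, div_eq_mul_inv, mul_pow]

lemma sqrt_succ_mul_succ_div_exp_one_pow_le (i : ℕ) :
    √(i + 1) * ((i + 1) / exp 1) ^ i ≤ 2 * i ! := by
  have h := Stirling.le_factorial_stirling (i + 1)
  push_cast at h
  rw [factorial_succ, pow_succ, sqrt_mul' _ (by positivity)] at h
  set Q := √(i + 1) * ((i + 1) / exp 1) ^ i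
  have hπ : 2 ≤ √(2 * π) :=
    (Real.le_sqrt zero_le_two (by positivity)).2 (by linarith [pi_gt_three])
  have he : exp 1 < 3 := by linarith [exp_one_lt_d9]
  have hQ : √(2 * π) * Q ≤ exp 1 * i ! := by
    refine le_of_mul_le_mul_left ?_ (by positivity : (0 : ℝ) < (i + 1) / exp 1)
    calc (i + 1) / exp 1 * (√(2 * π) * Q)
        = √(2 * π) * √(i + 1) * (((i + 1) / exp 1) ^ i * ((i + 1) / exp 1)) := by ring
      _ ≤ (i + 1) * i ! := by exact_mod_cast h
      _ = (i + 1) / exp 1 * (exp 1 * i !) := by field_simp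
  have : (0 : ℝ) ≤ Q := by positivity
  nlinarith [(by positivity : (0 : ℝ) < i !)]

variable {s : ℝ}

lemma pow_mul_exp_neg_mul_sq_le (hs : 0 ≤ s) (i n : ℕ) :
    (s * n ^ 2) ^ i * exp (-(s * n ^ 2)) ≤
      ((i + 1) / exp 1) ^ i * exp (-(s / (i + 1)) * n ^ 2) := by
  rw [show -(s / (i + 1)) * n ^ 2 = -(s * n ^ 2 / (i + 1)) by ring]
  exact pow_mul_exp_neg_le i (by positivity)

lemma summable_pow_mul_exp_neg_mul_sq (hs : 0 < s) (i : ℕ) :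
    Summable fun n : ℕ => (s * n ^ 2) ^ i * exp (-(s * n ^ 2)) :=
  ((summable_exp_neg_mul_sq (by positivity)).mul_left _).of_nonneg_of_le
    (fun n => by positivity) (pow_mul_exp_neg_mul_sq_le hs.le i)

lemma tsum_pow_mul_exp_neg_mul_sq_le (hs : 0 < s) (i : ℕ) :
    ∑' n : ℕ, (s * n ^ 2) ^ i * exp (-(s * n ^ 2)) ≤ 2 * i ! * (1 + √(π / s) / 2) := by
  set P := ((i + 1) / exp 1) ^ i
  have hs' : 0 < s / (i + 1) := by positivity
  have hP : P ≤ √(i + 1) * P :=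
    le_mul_of_one_le_left (by positivity) (one_le_sqrt.2 (by simp))
  have hQ := sqrt_succ_mul_succ_div_exp_one_pow_le i
  have hroot : √(π / (s / (i + 1))) = √(i + 1) * √(π / s) := by
    rw [← sqrt_mul (by positivity)]; congr 1; field_simp
  calc ∑' n : ℕ, (s * n ^ 2) ^ i * exp (-(s * n ^ 2))
      ≤ ∑' n : ℕ, P * exp (-(s / (i + 1)) * n ^ 2) :=
        (summable_pow_mul_exp_neg_mul_sq hs i).tsum_le_tsum (pow_mul_exp_neg_mul_sq_le hs.le i)
          ((summable_exp_neg_mul_sq hs').mul_left P)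
    _ = P * ∑' n : ℕ, exp (-(s / (i + 1)) * n ^ 2) := tsum_mul_left
    _ ≤ P * (1 + √(π / (s / (i + 1))) / 2) := by gcongr; exact tsum_exp_neg_mul_sq_le hs'
    _ = P + √(i + 1) * P * √(π / s) / 2 := by rw [hroot]; ring
    _ ≤ 2 * i ! + 2 * i ! * √(π / s) / 2 := by gcongr; linarith
    _ = 2 * i ! * (1 + √(π / s) / 2) := by ring

end Moments

lemma abs_tsum_mul_exp_neg_sq_mul_pow_le {c : ℕ → ℝ} {B τ : ℝ} (hB : ∀ n, |c n| ≤ B) (hτ : 0 < τ)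
    (i : ℕ) :
    |∑' n : ℕ, c n * exp (-(n : ℝ) ^ 2 * π ^ 2 * τ) * (-(n : ℝ) ^ 2 * π ^ 2) ^ i| ≤
      2 * B * (1 + 1 / √τ) * i ! / τ ^ i := by
  set s := π ^ 2 * τ
  have hs : 0 < s := by positivity
  have hB0 : 0 ≤ B := (abs_nonneg _).trans (hB 0)
  have hterm (n : ℕ) : ‖c n * exp (-(n : ℝ) ^ 2 * π ^ 2 * τ) * (-(n : ℝ) ^ 2 * π ^ 2) ^ i‖ ≤
      B / τ ^ i * ((s * n ^ 2) ^ i * exp (-(s * n ^ 2))) := by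
    have hrhs : B / τ ^ i * ((s * n ^ 2) ^ i * exp (-(s * n ^ 2))) =
        B * exp (-(n : ℝ) ^ 2 * π ^ 2 * τ) * ((n : ℝ) ^ 2 * π ^ 2) ^ i := by
      simp only [s]; field_simp; ring_nf
    rw [hrhs, Real.norm_eq_abs, abs_mul, abs_mul, abs_of_pos (exp_pos _), abs_pow, neg_mul,
      abs_neg, abs_of_nonneg (by positivity : (0 : ℝ) ≤ (n : ℝ) ^ 2 * π ^ 2)]
    gcongr
    exact hB n
  have hroot : √(π / s) / 2 ≤ 1 / √τ := by
    have hπs : π / s ≤ 1 / τ := by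
      rw [div_le_div_iff₀ hs hτ]; nlinarith [pi_gt_three]
    have : √(π / s) ≤ 1 / √τ := (sqrt_le_sqrt hπs).trans_eq (by rw [one_div, one_div, sqrt_inv])
    linarith [sqrt_nonneg (π / s)]
  calc _ ≤ B / τ ^ i * ∑' n : ℕ, (s * n ^ 2) ^ i * exp (-(s * n ^ 2)) :=
        tsum_of_norm_bounded ((summable_pow_mul_exp_neg_mul_sq hs i).hasSum.mul_left _) hterm
    _ ≤ B / τ ^ i * (2 * i ! * (1 + √(π / s) / 2)) :=
        mul_le_mul_of_nonneg_left (tsum_pow_mul_exp_neg_mul_sq_le hs i)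
          (div_nonneg hB0 (by positivity))
    _ ≤ B / τ ^ i * (2 * i ! * (1 + 1 / √τ)) := by gcongr
    _ = 2 * B * (1 + 1 / √τ) * i ! / τ ^ i := by ring

lemma summable_abs_mul_exp_neg_sq_mul_cosh {c : ℕ → ℝ} {B τ : ℝ} (hB : ∀ n, |c n| ≤ B)
    (hτ : 0 < τ) (x : ℝ) :
    Summable fun n : ℕ => |c n * exp (-(n : ℝ) ^ 2 * π ^ 2 * τ) * √2| * cosh (n * π * x) := by
  refine ((summable_exp_neg_mul_sq_mul_cosh (by positivity : 0 < π ^ 2 * τ) (π * x)).mul_left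
    (B * √2)).of_nonneg_of_le (fun n => by positivity) fun n => ?_
  rw [abs_mul, abs_mul, abs_of_pos (exp_pos _), abs_of_nonneg (sqrt_nonneg 2), mul_assoc _ π x,
    show -(n : ℝ) ^ 2 * π ^ 2 * τ = -(π ^ 2 * τ) * n ^ 2 by ring]
  have := cosh_pos (n * (π * x))
  calc _ = (|c n| * √2) * (exp (-(π ^ 2 * τ) * n ^ 2) * cosh (n * (π * x))) := by ring
    _ ≤ (B * √2) * (exp (-(π ^ 2 * τ) * n ^ 2) * cosh (n * (π * x))) := by gcongr; exact hB n

lemma tsum_mul_cos_eq_tsum_taylor {a ω : ℕ → ℝ} {x : ℝ}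
    (h : Summable fun n => |a n| * cosh (ω n * x)) :
    ∑' n, a n * cos (ω n * x) = ∑' i, (∑' n, a n * (-ω n ^ 2) ^ i) * x ^ (2 * i) / (2 * i)! := by
  let f : ℕ → ℕ → ℝ := fun n i => a n * ((-1) ^ i * (ω n * x) ^ (2 * i) / (2 * i)!)
  let g : ℕ × ℕ → ℝ := fun p => |a p.1| * ((ω p.1 * x) ^ (2 * p.2) / (2 * p.2)!)
  have hg0 : 0 ≤ g := fun p =>
    mul_nonneg (abs_nonneg _) (div_nonneg ((even_two_mul p.2).pow_nonneg _) (Nat.cast_nonneg _))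
  have hg : Summable g := (summable_prod_of_nonneg hg0).2
    ⟨fun n => ((Real.hasSum_cosh (ω n * x)).mul_left |a n|).summable,
      h.congr fun n => ((Real.hasSum_cosh (ω n * x)).mul_left |a n|).tsum_eq.symm⟩
  have hf : Summable (Function.uncurry f) := hg.of_norm_bounded fun p => by
    simp only [Function.uncurry, f, g, norm_mul, norm_div, norm_pow, norm_neg, norm_one, one_pow,
      one_mul, Real.norm_eq_abs, Nat.abs_cast]
    rw [← abs_mul, (even_two_mul _).pow_abs]
  calc ∑' n, a n * cos (ω n * x) = ∑' n, ∑' i, f n i :=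
        tsum_congr fun n => by rw [Real.cos_eq_tsum, ← tsum_mul_left]
    _ = ∑' i, ∑' n, f n i := hf.tsum_comm.symm
    _ = _ := by
        refine tsum_congr fun i => ?_
        rw [mul_div_assoc, ← tsum_mul_right]
        exact tsum_congr fun n => by dsimp only [f]; ring

theorem heat_trace_taylor_coeffs :
    ∃ K : ℝ, 0 < K ∧
      ∀ (c : ℕ → ℝ) (B : ℝ), (∀ n, |c n| ≤ B) →
        ∀ (τ : ℝ), 0 < τ →
          (∀ x : ℝ,
            (∑' n : ℕ, c n * Real.exp (-(n : ℝ) ^ 2 * π ^ 2 * τ) *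
              Real.sqrt 2 * Real.cos ((n : ℝ) * π * x)) =
            ∑' i : ℕ,
              (Real.sqrt 2 * ∑' n : ℕ, c n * Real.exp (-(n : ℝ) ^ 2 * π ^ 2 * τ) *
                  (-(n : ℝ) ^ 2 * π ^ 2) ^ i) *
                x ^ (2 * i) / (Nat.factorial (2 * i) : ℝ)) ∧
          ∀ i : ℕ,
            |Real.sqrt 2 * ∑' n : ℕ, c n * Real.exp (-(n : ℝ) ^ 2 * π ^ 2 * τ) *
                (-(n : ℝ) ^ 2 * π ^ 2) ^ i| ≤
              K * B * (1 + 1 / Real.sqrt τ) * (Nat.factorial i : ℝ) / τ ^ i := by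
  refine ⟨2 * √2, by positivity, fun c B hB τ hτ => ⟨fun x => ?_, fun i => ?_⟩⟩
  · rw [tsum_mul_cos_eq_tsum_taylor (summable_abs_mul_exp_neg_sq_mul_cosh hB hτ x)]
    refine tsum_congr fun i => ?_
    rw [← tsum_mul_left]
    congr 3 with n
    ring
  · rw [abs_mul, abs_of_nonneg (sqrt_nonneg 2)]
    calc √2 * _ ≤ √2 * (2 * B * (1 + 1 / √τ) * i ! / τ ^ i) := by
          gcongr; exact abs_tsum_mul_exp_neg_sq_mul_pow_le hB hτ i
      _ = _ := by ring
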